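/- A real Banach space X has the λ-bounded approximation property (λ-BAP) if and only if the Banach algebra F̄(X) of approximable operators on X has a λ-bounded left approximate identity (λ-BLAI). -/

import Mathlib

set_option maxSynthPendingDepth 3

open Filter Topology Metric NormedSpace Function

/-- `u` is a finite-rank operator: its range is finite-dimensional. -/
def FinRankOp {X Y : Type*} [NormedAddCommGroup X] [NormedSpace ℝ X]
    [NormedAddCommGroup Y] [NormedSpace ℝ Y] (u : X →L[ℝ] Y) : Prop :=
  FiniteDimensional ℝ (LinearMap.range (u : X →ₗ[ℝ] Y))

/-- `u` is approximable: a limit in operator norm of finite-rank operators. -/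
def ApproxOp {X Y : Type*} [NormedAddCommGroup X] [NormedSpace ℝ X]
    [NormedAddCommGroup Y] [NormedSpace ℝ Y] (u : X →L[ℝ] Y) : Prop :=
  u ∈ closure {f : X →L[ℝ] Y | FinRankOp f}

/-- `u` is a compact operator: it maps the closed unit ball to a relatively compact set. -/
def CompactOp {X Y : Type*} [NormedAddCommGroup X] [NormedSpace ℝ X]
    [NormedAddCommGroup Y] [NormedSpace ℝ Y] (u : X →L[ℝ] Y) : Prop :=
  IsCompact (closure (u '' Metric.closedBall 0 1))

/-- `Y` has the λ-bounded approximation property (λ-BAP). -/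
def HasBAP (Y : Type*) [NormedAddCommGroup Y] [NormedSpace ℝ Y] (l : ℝ) : Prop :=
  ∀ K : Set Y, IsCompact K → ∀ ε : ℝ, 0 < ε →
    ∃ u : Y →L[ℝ] Y, FinRankOp u ∧ ‖u‖ ≤ l ∧ ∀ x ∈ K, ‖u x - x‖ < ε

/-- The Banach algebra F̄(X) of approximable operators on `X` has a λ-bounded left
approximate identity: a net `(e i)` of approximable operators with `‖e i‖ ≤ λ` such that
`‖e i * x - x‖ → 0` for every approximable operator `x` (multiplication is composition). -/
def ApproxAlgHasBLAI (X : Type u) [NormedAddCommGroup X] [NormedSpace ℝ X] (l : ℝ) : Prop :=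
  ∃ (ι : Type u) (_ : Preorder ι) (_ : Nonempty ι) (_ : IsDirected ι (· ≤ ·))
    (e : ι → X →L[ℝ] X),
    (∀ i, ApproxOp (e i) ∧ ‖e i‖ ≤ l) ∧
    ∀ x : X →L[ℝ] X, ApproxOp x →
      Tendsto (fun i => ‖(e i).comp x - x‖) atTop (𝓝 (0 : ℝ))


/-!
Both directions go through uniform convergence to the identity on compact sets.
The operators provided by the λ-BAP, indexed by a compact set and a tolerance, form a net that
converges to the identity uniformly on compacts; hence `e i ∘ x → x` in norm for every
finite-rank `x`, whose image of the unit ball is relatively compact. The `e i` are uniformly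
bounded, so `x ↦ e i ∘ x` is an equicontinuous family and the set of `x` with `e i ∘ x → x` is
closed: it contains every approximable operator.

Conversely, testing a λ-BLAI against rank-one operators `φ(·) v` with `φ v = 1` gives
`e i v → v` pointwise. A bounded net is equicontinuous, so by Ascoli the convergence is uniform on
compacts, and a finite-rank operator of norm `≤ λ` close to a suitable `e i` witnesses the λ-BAP.
-/

section Operators

variable {X Y : Type*} [NormedAddCommGroup X] [NormedSpace ℝ X]
  [NormedAddCommGroup Y] [NormedSpace ℝ Y]

lemma FinRankOp.smul {u : X →L[ℝ] Y} (hu : FinRankOp u) (c : ℝ) : FinRankOp (c • u) := by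
  have : FiniteDimensional ℝ (LinearMap.range (u : X →ₗ[ℝ] Y)) := hu
  refine Submodule.finiteDimensional_of_le (S₂ := LinearMap.range (u : X →ₗ[ℝ] Y)) ?_
  rintro _ ⟨v, rfl⟩
  exact ⟨c • v, by simp⟩

lemma finRankOp_smulRight (φ : X →L[ℝ] ℝ) (y : Y) : FinRankOp (φ.smulRight y) := by
  refine Submodule.finiteDimensional_of_le (S₂ := Submodule.span ℝ {y}) ?_
  rintro _ ⟨v, rfl⟩
  exact Submodule.smul_mem _ _ (Submodule.mem_span_singleton_self y)

lemma FinRankOp.compactOp {u : X →L[ℝ] Y} (hu : FinRankOp u) : CompactOp u := by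
  set S := LinearMap.range (u : X →ₗ[ℝ] Y)
  have : FiniteDimensional ℝ S := hu
  refine ((isCompact_closedBall (0 : S) ‖u‖).image continuous_subtype_val).closure_of_subset ?_
  rintro _ ⟨v, hv, rfl⟩
  refine ⟨⟨u v, LinearMap.mem_range_self _ v⟩, ?_, rfl⟩
  rw [mem_closedBall_zero_iff] at hv ⊢
  exact u.le_of_opNorm_le_of_le le_rfl hv |>.trans_eq (mul_one _)

lemma ApproxOp.exists_finRankOp_norm_le {e : X →L[ℝ] Y} (he : ApproxOp e) {l : ℝ}
    (hel : ‖e‖ ≤ l) {δ : ℝ} (hδ : 0 < δ) :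
    ∃ u : X →L[ℝ] Y, FinRankOp u ∧ ‖u‖ ≤ l ∧ ‖u - e‖ < δ := by
  obtain ⟨f, hf, hef⟩ := Metric.mem_closure_iff.1 he (δ / 2) (half_pos hδ)
  rw [dist_eq_norm'] at hef
  have hl : 0 ≤ l := (norm_nonneg e).trans hel
  have hlδ : 0 < l + δ / 2 := by linarith
  have hf_norm : ‖f‖ ≤ l + δ / 2 := by linarith [norm_le_insert' f e]
  -- `c` makes `‖c • f‖ ≤ l` while keeping `c • f` within `δ / 2` of `f`
  set c := l / (l + δ / 2)
  have hc : 0 ≤ c := div_nonneg hl hlδ.le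
  have h1c : 1 - c = δ / 2 / (l + δ / 2) := by simp only [c]; field_simp; ring
  refine ⟨c • f, hf.smul c, ?_, ?_⟩
  · calc ‖c • f‖ = c * ‖f‖ := by rw [norm_smul, Real.norm_of_nonneg hc]
      _ ≤ c * (l + δ / 2) := by gcongr
      _ = l := div_mul_cancel₀ l hlδ.ne'
  · have hcf : ‖c • f - f‖ ≤ δ / 2 :=
      calc ‖c • f - f‖ = (1 - c) * ‖f‖ := by
            rw [norm_sub_rev, ← norm_smul_of_nonneg (by rw [h1c]; positivity), sub_smul,
              one_smul]
        _ ≤ (1 - c) * (l + δ / 2) := by gcongr; rw [h1c]; positivity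
        _ = δ / 2 := by rw [h1c, div_mul_cancel₀ _ hlδ.ne']
    calc ‖c • f - e‖ ≤ ‖c • f - f‖ + ‖f - e‖ := norm_sub_le_norm_sub_add_norm_sub _ _ _
      _ < δ := by linarith

end Operators

section Nets

variable {X Y : Type*} [NormedAddCommGroup X] [NormedSpace ℝ X]
  [NormedAddCommGroup Y] [NormedSpace ℝ Y] {ι : Type*} {p : Filter ι}

open ContinuousLinearMap

lemma equicontinuous_of_norm_apply_le {e : ι → X →L[ℝ] Y} {l : ℝ}
    (h : ∀ i x, ‖e i x‖ ≤ l * ‖x‖) : Equicontinuous fun i => ⇑(e i) :=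
  ((NormedSpace.equicontinuous_TFAE e).out 3 1).mp (⟨l, h⟩ : ∃ C : ℝ, ∀ i x, ‖e i x‖ ≤ C * ‖x‖)

lemma tendstoUniformlyOn_of_tendsto_apply {e : ι → X →L[ℝ] Y} {l : ℝ} (hbd : ∀ i, ‖e i‖ ≤ l)
    {f : X → Y} (hf : ∀ x, Tendsto (fun i => e i x) p (𝓝 (f x))) {K : Set X}
    (hK : IsCompact K) : TendstoUniformlyOn (fun i => ⇑(e i)) f p K := by
  have hequi := equicontinuous_of_norm_apply_le fun i => (e i).le_of_opNorm_le (hbd i)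
  have hcover : ⋃₀ {K : Set X | IsCompact K} = Set.univ :=
    Set.sUnion_eq_univ_iff.2 fun x => ⟨{x}, isCompact_singleton, rfl⟩
  have := (EquicontinuousOn.tendsto_uniformOnFun_iff_pi (fun _ hK => hK) hcover
    (fun K _ => hequi.equicontinuousOn K) p f).2 (tendsto_pi_nhds.2 hf)
  exact UniformOnFun.tendsto_iff_tendstoUniformlyOn.1 this K hK

lemma isClosed_setOf_tendsto_comp {e : ι → X →L[ℝ] X} {l : ℝ} (hbd : ∀ i, ‖e i‖ ≤ l) :
    IsClosed {x : Y →L[ℝ] X | Tendsto (fun i => (e i).comp x) p (𝓝 x)} := by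
  have hequi := equicontinuous_of_norm_apply_le (e := fun i => compL ℝ Y X X (e i)) (l := l)
    fun i x => (opNorm_comp_le _ _).trans (by gcongr; exact hbd i)
  exact hequi.isClosed_setOfPred_tendsto continuous_id

lemma CompactOp.tendsto_comp {e : ι → X →L[ℝ] X}
    (he : ∀ K, IsCompact K → TendstoUniformlyOn (fun i => ⇑(e i)) id p K)
    {x : Y →L[ℝ] X} (hx : CompactOp x) : Tendsto (fun i => (e i).comp x) p (𝓝 x) := by
  rw [Metric.tendsto_nhds]
  intro ε hε
  filter_upwards [Metric.tendstoUniformlyOn_iff.1 (he _ hx) (ε / 2) (half_pos hε)] with i hi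
  rw [dist_eq_norm]
  refine lt_of_le_of_lt (opNorm_le_of_unit_norm (half_pos hε).le fun v hv => ?_) (half_lt_self hε)
  have hxv : x v ∈ closure (x '' closedBall 0 1) :=
    subset_closure ⟨v, mem_closedBall_zero_iff.2 hv.le, rfl⟩
  simpa [dist_eq_norm'] using (hi (x v) hxv).le

lemma ApproxOp.tendsto_comp {e : ι → X →L[ℝ] X} {l : ℝ} (hbd : ∀ i, ‖e i‖ ≤ l)
    (he : ∀ K, IsCompact K → TendstoUniformlyOn (fun i => ⇑(e i)) id p K)
    {x : Y →L[ℝ] X} (hx : ApproxOp x) : Tendsto (fun i => (e i).comp x) p (𝓝 x) :=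
  closure_minimal (fun _ hf => (FinRankOp.compactOp hf).tendsto_comp he)
    (isClosed_setOf_tendsto_comp hbd) hx

lemma tendsto_apply_of_tendsto_comp {e : ι → X →L[ℝ] X}
    (h : ∀ x : X →L[ℝ] X, FinRankOp x → Tendsto (fun i => (e i).comp x) p (𝓝 x)) (v : X) :
    Tendsto (fun i => e i v) p (𝓝 v) := by
  rcases eq_or_ne v 0 with rfl | hv
  · simpa using tendsto_const_nhds
  obtain ⟨φ, hφ⟩ := SeparatingDual.exists_eq_one (R := ℝ) hv
  simpa [Function.comp_def, hφ] using
    ((apply ℝ X v).continuous.tendsto _).comp (h _ (finRankOp_smulRight φ v))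

end Nets

section BoundedApproximationProperty

variable {X : Type u} [NormedAddCommGroup X] [NormedSpace ℝ X] {l : ℝ}

open TopologicalSpace

theorem HasBAP.approxAlgHasBLAI (h : HasBAP X l) : ApproxAlgHasBLAI X l := by
  have := fun i : Compacts X × ℕ => h i.1 i.1.isCompact (1 / (i.2 + 1)) Nat.one_div_pos_of_nat
  choose e hfin hnorm happrox using this
  have hunif : ∀ K, IsCompact K → TendstoUniformlyOn (fun i => ⇑(e i)) id atTop K := by
    intro K hK
    rw [Metric.tendstoUniformlyOn_iff]
    intro ε hε
    obtain ⟨n, hn⟩ := exists_nat_one_div_lt hε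
    filter_upwards [eventually_ge_atTop (⟨K, hK⟩, n)] with i hi x hx
    rw [id, dist_eq_norm']
    calc ‖e i x - x‖ < 1 / (i.2 + 1) := happrox i x (hi.1 hx)
      _ ≤ 1 / (n + 1) := Nat.one_div_le_one_div hi.2
      _ < ε := hn
  exact ⟨Compacts X × ℕ, inferInstance, inferInstance, inferInstance, e,
    fun i => ⟨subset_closure (hfin i), hnorm i⟩,
    fun x hx => tendsto_iff_norm_sub_tendsto_zero.1 (hx.tendsto_comp hnorm hunif)⟩

theorem ApproxAlgHasBLAI.hasBAP (h : ApproxAlgHasBLAI X l) : HasBAP X l := by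
  obtain ⟨ι, _, _, _, e, he, hlim⟩ := h
  have hunif : ∀ K, IsCompact K → TendstoUniformlyOn (fun i => ⇑(e i)) id atTop K :=
    fun K hK => tendstoUniformlyOn_of_tendsto_apply (fun i => (he i).2)
      (tendsto_apply_of_tendsto_comp fun x hx =>
        tendsto_iff_norm_sub_tendsto_zero.2 (hlim x (subset_closure hx))) hK
  intro K hK ε hε
  obtain ⟨M, hM, hKM⟩ := hK.isBounded.exists_pos_norm_le
  obtain ⟨i, hi⟩ := (Metric.tendstoUniformlyOn_iff.1 (hunif K hK) (ε / 2) (half_pos hε)).exists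
  obtain ⟨u, hu, hul, hue⟩ :=
    (he i).1.exists_finRankOp_norm_le (he i).2 (δ := ε / (2 * M)) (by positivity)
  refine ⟨u, hu, hul, fun x hx => ?_⟩
  have hux : ‖u x - e i x‖ ≤ ε / 2 :=
    calc ‖u x - e i x‖ = ‖(u - e i) x‖ := rfl
      _ ≤ ε / (2 * M) * M := (u - e i).le_of_opNorm_le_of_le hue.le (hKM x hx)
      _ = ε / 2 := by field_simp
  have hex : ‖e i x - x‖ < ε / 2 := by simpa [dist_eq_norm'] using hi x hx
  calc ‖u x - x‖ ≤ ‖u x - e i x‖ + ‖e i x - x‖ := norm_sub_le_norm_sub_add_norm_sub _ _ _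
    _ < ε := by linarith

end BoundedApproximationProperty

theorem bap_iff_approx_blai_general (X : Type u) [NormedAddCommGroup X] [NormedSpace ℝ X]
    (l : ℝ) :
    HasBAP X l ↔ ApproxAlgHasBLAI X l :=
  ⟨HasBAP.approxAlgHasBLAI, ApproxAlgHasBLAI.hasBAP⟩

/-- Theorem A (approximable case): `X` has λ-BAP iff F̄(X) has a λ-BLAI. -/
theorem bap_iff_approx_blai (X : Type u) [NormedAddCommGroup X] [NormedSpace ℝ X]
    [CompleteSpace X] (l : ℝ) (hl : 1 ≤ l) :
    HasBAP X l ↔ ApproxAlgHasBLAI X l :=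
  bap_iff_approx_blai_general X l
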